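/- Let n be a natural number and v : Fin n → Fin n → ℝ a valuation matrix. If p, q : Fin n → ℝ are both market-clearing price vectors and α ∈ [0,1], then the convex combination r = α • p + (1 - α) • q is also market-clearing. -/
import Mathlib


/-- `σ` is induced by `p`: every buyer `i` prefers product `σ i` at prices `p`. -/
def Induced (n : ℕ) (v : Fin n → Fin n → ℝ) (p : Fin n → ℝ)
    (σ : Equiv.Perm (Fin n)) : Prop :=
  ∀ i k, v i (σ i) - p (σ i) ≥ v i k - p k

/-- `p` is market-clearing: some permutation is induced by `p`. -/
def MarketClearing (n : ℕ) (v : Fin n → Fin n → ℝ) (p : Fin n → ℝ) : Prop :=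
  ∃ σ : Equiv.Perm (Fin n), Induced n v p σ

/-- If `σ` is induced by `p` and `τ` is induced by `q`, then `τ` is also
induced by `p` (any efficient matching is supported by any clearing prices). -/
lemma induced_trans (n : ℕ) (v : Fin n → Fin n → ℝ) (p q : Fin n → ℝ)
    (σ τ : Equiv.Perm (Fin n)) (hσ : Induced n v p σ) (hτ : Induced n v q τ) :
    Induced n v p τ := by
  have hple : ∀ i ∈ Finset.univ, v i (τ i) - p (τ i) ≤ v i (σ i) - p (σ i) :=
    fun i _ => hσ i (τ i)
  have hpsum : ∑ i, p (σ i) = ∑ i, p (τ i) := by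
    rw [Equiv.sum_comp σ p, Equiv.sum_comp τ p]
  have hvsum : ∑ i, v i (σ i) ≤ ∑ i, v i (τ i) := by
    have h1 : ∑ i, (v i (σ i) - q (σ i)) ≤ ∑ i, (v i (τ i) - q (τ i)) :=
      Finset.sum_le_sum fun i _ => hτ i (σ i)
    have hqsum : ∑ i, q (σ i) = ∑ i, q (τ i) := by
      rw [Equiv.sum_comp σ q, Equiv.sum_comp τ q]
    simp only [Finset.sum_sub_distrib, hqsum] at h1
    linarith
  have hsumeq : ∑ i, (v i (τ i) - p (τ i)) = ∑ i, (v i (σ i) - p (σ i)) := by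
    have hle : ∑ i, (v i (τ i) - p (τ i)) ≤ ∑ i, (v i (σ i) - p (σ i)) :=
      Finset.sum_le_sum hple
    simp only [Finset.sum_sub_distrib, hpsum] at hle ⊢
    linarith
  have heq := (Finset.sum_eq_sum_iff_of_le hple).mp hsumeq
  intro i k
  have := heq i (Finset.mem_univ i)
  have := hσ i k
  linarith

/-- A convex combination of two market-clearing price vectors is
market-clearing. -/
theorem stmt_9 (n : ℕ) (v : Fin n → Fin n → ℝ) (p q : Fin n → ℝ)
    (hp : MarketClearing n v p) (hq : MarketClearing n v q)
    (α : ℝ) (hα : α ∈ Set.Icc (0 : ℝ) 1) :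
    MarketClearing n v (α • p + (1 - α) • q) := by
  obtain ⟨σ, hσ⟩ := hp
  obtain ⟨τ, hτ⟩ := hq
  have hτp : Induced n v p τ := induced_trans n v p q σ τ hσ hτ
  refine ⟨τ, fun i k => ?_⟩
  obtain ⟨h0, h1⟩ := hα
  have hp1 := hτp i k
  have hq1 := hτ i k
  simp only [Pi.add_apply, Pi.smul_apply, smul_eq_mul]
  nlinarith [mul_le_mul_of_nonneg_left (sub_le_sub hp1 (le_refl 0)) h0]
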